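/- arXiv:2510.07202 — 2 statements merged into one kernel-verified Lean document; each statement's English description precedes it below -/
import Mathlib

section
/- For any affine maps A₁,...,A_d between Euclidean spaces (with A_k : ℝ^{w_k} → ℝ^{w_{k+1}}), the set S = { x ∈ ℝ^n : for every k = 1,...,d−1, all coordinates of (ReLU ∘ A_k ∘ ⋯ ∘ ReLU ∘ A₁)(x) are strictly positive } is a convex subset of ℝ^n. -/
/-- Coordinatewise ReLU on Euclidean space. -/
def relu {m : ℕ} (x : EuclideanSpace ℝ (Fin m)) : EuclideanSpace ℝ (Fin m) :=
  WithLp.toLp 2 (fun i => max 0 (x i))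

/-- Output of the `k`-th hidden layer (post-ReLU) of the network with affine
layers `A 0, A 1, ...`; `hiddenLayer w A 0 = id`. -/
noncomputable def hiddenLayer (w : ℕ → ℕ)
    (A : ∀ k : ℕ, EuclideanSpace ℝ (Fin (w k)) →ᵃ[ℝ] EuclideanSpace ℝ (Fin (w (k + 1)))) :
    (k : ℕ) → EuclideanSpace ℝ (Fin (w 0)) → EuclideanSpace ℝ (Fin (w k))
  | 0 => id
  | k + 1 => fun x => relu (A k (hiddenLayer w A k x))

theorem stmt_4 (d : ℕ) (w : ℕ → ℕ)
    (A : ∀ k : ℕ, EuclideanSpace ℝ (Fin (w k)) →ᵃ[ℝ] EuclideanSpace ℝ (Fin (w (k + 1)))) :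
    Convex ℝ {x : EuclideanSpace ℝ (Fin (w 0)) |
      ∀ k, 1 ≤ k → k ≤ d - 1 → ∀ i, 0 < hiddenLayer w A k x i} := by
  intro x hx y hy a b ha hb hab
  -- key: on convex combinations, the hidden layers are affine-combination-compatible
  have key : ∀ k, k ≤ d - 1 →
      hiddenLayer w A k (a • x + b • y)
        = a • hiddenLayer w A k x + b • hiddenLayer w A k y := by
    intro k
    induction k with
    | zero => intro _; simp [hiddenLayer]
    | succ k ih =>
      intro hk
      have hk' : k ≤ d - 1 := Nat.le_of_succ_le hk
      have heq := ih hk'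
      have hposx := hx (k + 1) (Nat.succ_le_succ (Nat.zero_le k)) hk
      have hposy := hy (k + 1) (Nat.succ_le_succ (Nat.zero_le k)) hk
      show relu (A k (hiddenLayer w A k (a • x + b • y))) = _
      rw [heq, Convex.combo_affine_apply hab]
      ext i
      have hxk : 0 < A k (hiddenLayer w A k x) i := by
        have := hposx i
        simpa [hiddenLayer, relu, lt_max_iff] using this
      have hyk : 0 < A k (hiddenLayer w A k y) i := by
        have := hposy i
        simpa [hiddenLayer, relu, lt_max_iff] using this
      have h3 : 0 ≤ a * A k (hiddenLayer w A k x) i + b * A k (hiddenLayer w A k y) i := by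
        nlinarith
      simp only [relu, hiddenLayer, PiLp.add_apply, PiLp.smul_apply, smul_eq_mul, PiLp.toLp_apply]
      rw [max_eq_right hxk.le, max_eq_right hyk.le]
      exact max_eq_right h3
  intro k hk1 hk2 i
  have heq := key k hk2
  rw [heq]
  have hxk := hx k hk1 hk2 i
  have hyk := hy k hk1 hk2 i
  simp only [PiLp.add_apply, PiLp.smul_apply, smul_eq_mul]
  rcases ha.lt_or_eq with ha' | ha'
  · nlinarith [mul_pos ha' hxk, mul_nonneg hb hyk.le]
  · have hb' : 0 < b := by linarith
    nlinarith [mul_pos hb' hyk]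
end

section
/- Suppose N : ℝ^n → ℝ is affine on the closed ball C = closedBall(x₀, r) (r > 0) and sup_{x ∈ K} |f(x) − N(x)| < 1/16, where f(x) = ‖x − x₀‖², K = closedBall(x₀, 1/2), and r = 1/√8 < 1/2. Then a contradiction follows; i.e., no function affine on C can approximate f on K to within 1/16 in sup norm. -/
open Metric

theorem stmt_18 (n : ℕ) (hn : 1 ≤ n)
    (x₀ : EuclideanSpace ℝ (Fin n)) (hx₀ : ∀ i, x₀ i = 1/2)
    (f : EuclideanSpace ℝ (Fin n) → ℝ) (hf : ∀ x, f x = ‖x - x₀‖^2)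
    (N : EuclideanSpace ℝ (Fin n) → ℝ)
    (hAff : ∃ A : EuclideanSpace ℝ (Fin n) →ᵃ[ℝ] ℝ,
      ∀ x ∈ closedBall x₀ (1/Real.sqrt 8), N x = A x)
    (hsup : (⨆ x ∈ closedBall x₀ (1/2), ENNReal.ofReal |f x - N x|)
      < ENNReal.ofReal (1/16)) :
    False := by
  obtain ⟨A, hA⟩ := hAff
  have h8 : (0:ℝ) < Real.sqrt 8 := Real.sqrt_pos.mpr (by norm_num)
  set r : ℝ := 1 / Real.sqrt 8 with hr
  have hrpos : 0 < r := by positivity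
  have hr2 : r ^ 2 = 1 / 8 := by
    rw [hr, div_pow, one_pow, Real.sq_sqrt (by norm_num : (8:ℝ) ≥ 0)]
  have hrle : r ≤ 1 / 2 := by
    rw [hr, div_le_div_iff₀ h8 (by norm_num)]
    nlinarith [Real.sq_sqrt (show (0:ℝ) ≤ 8 by norm_num), Real.sqrt_nonneg 8]
  set v : EuclideanSpace ℝ (Fin n) := EuclideanSpace.single ⟨0, hn⟩ r with hv
  have hnv : ‖v‖ = r := by
    simp [hv, EuclideanSpace.norm_single, Real.norm_eq_abs, abs_of_pos hrpos]
  -- small-ball membership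
  have hmem : ∀ t : ℝ, |t| ≤ 1 → x₀ + t • v ∈ closedBall x₀ r := by
    intro t ht
    simp only [mem_closedBall, dist_eq_norm, add_sub_cancel_left, norm_smul,
      Real.norm_eq_abs, hnv]
    calc |t| * r ≤ 1 * r := by gcongr
    _ = r := one_mul r
  have hbig : ∀ x ∈ closedBall x₀ r, |f x - N x| < 1/16 := by
    intro x hx
    have hx2 : x ∈ closedBall x₀ (1/2) := by
      exact mem_closedBall.mpr (le_trans (mem_closedBall.mp hx) hrle)
    have hle : ENNReal.ofReal |f x - N x| ≤
        ⨆ x ∈ closedBall x₀ (1/2), ENNReal.ofReal |f x - N x| :=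
      le_iSup₂ (f := fun x _ => ENNReal.ofReal |f x - N x|) x hx2
    have := lt_of_le_of_lt hle hsup
    rw [ENNReal.ofReal_lt_ofReal_iff (by norm_num)] at this
    simpa using this
  -- the three points
  have hp : x₀ + v ∈ closedBall x₀ r := by simpa using hmem 1 (by norm_num)
  have hq : x₀ - v ∈ closedBall x₀ r := by
    have := hmem (-1) (by norm_num)
    simpa [neg_smul, one_smul, sub_eq_add_neg] using this
  have hc : x₀ ∈ closedBall x₀ r := mem_closedBall_self hrpos.le
  have hfp : f (x₀ + v) = 1/8 := by rw [hf]; simp [hnv, hr2]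
  have hfq : f (x₀ - v) = 1/8 := by
    rw [hf]; simp only [sub_sub_cancel_left, norm_neg, hnv, hr2]
  have hfc : f x₀ = 0 := by rw [hf]; simp
  have hmid : A x₀ = (A (x₀ + v) + A (x₀ - v)) / 2 := by
    have h := AffineMap.map_midpoint A (x₀ + v) (x₀ - v)
    rw [midpoint_add_sub] at h
    rw [h, midpoint_eq_smul_add]; simp [invOf_eq_inv]; ring
  have h1 := hbig _ hp
  have h2 := hbig _ hq
  have h3 := hbig _ hc
  rw [hfp, hA _ hp] at h1
  rw [hfq, hA _ hq] at h2
  rw [hfc, hA _ hc] at h3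
  rw [abs_lt] at h1 h2 h3
  linarith [hmid, h1.1, h1.2, h2.1, h2.2, h3.1, h3.2]
end
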